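/- arXiv:2206.00750 — 2 statements merged into one kernel-verified Lean document; each statement's English description precedes it below -/
import Mathlib

section
/- If β is a real number such that ‖β·h(k)‖ → 0 as k → ∞, then β ∈ ℤ[α]; that is, there exist integers m_0, m_1, m_2 such that β = m_0 + m_1·α + m_2·α². -/
/-!
Write `a k` for the integer nearest to `β h k` and `E k = β h k - a k`, so `E → 0`. The defect
`E (k+3) - E (k+2) - E k` is an integer tending to `0`, hence eventually `0`: from some `K` on,
`E` satisfies the Narayana recurrence. The characteristic polynomial `X³ - X² - 1` has the real root
`1/α > 1` and two complex roots inside the unit disc, and the coordinate `D` of a solution along the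
real root gets multiplied by `1/α` at each step; a solution tending to `0` must therefore have
`D = 0`. As `D` is linear and `D(h) K = α^-(K+3)`, this gives `β = α^(K+3) · D(a) K ∈ ℤ[α]`.
-/

/-- Distance from a real number to the nearest integer. -/
noncomputable def distToInt (x : ℝ) : ℝ := |x - round x|

/-- The Narayana sequence: `h 1 = 1`, `h 2 = 2`, `h 3 = 3`,
`h k = h (k-1) + h (k-3)` for `k > 3`. -/
def narayana : ℕ → ℕ
  | 0 => 1
  | 1 => 1
  | 2 => 2
  | 3 => 3
  | (k + 4) => narayana (k + 3) + narayana (k + 1)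

open Filter Topology

lemma narayana_add_three (k : ℕ) : narayana (k + 3) = narayana (k + 2) + narayana k := by
  cases k <;> rfl

lemma exists_eq_of_mem_adjoin_int {A : Type*} [CommRing A] {α : A} (hα : α ^ 3 + α = 1) {x : A}
    (hx : x ∈ Algebra.adjoin ℤ {α}) :
    ∃ m0 m1 m2 : ℤ, x = m0 + m1 * α + m2 * α ^ 2 := by
  induction hx using Algebra.adjoin_induction with
  | mem x hx => exact ⟨0, 1, 0, by rw [Set.mem_singleton_iff.mp hx]; push_cast; ring⟩
  | algebraMap r => exact ⟨r, 0, 0, by simp⟩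
  | add x y _ _ hx hy =>
    obtain ⟨a0, a1, a2, rfl⟩ := hx
    obtain ⟨b0, b1, b2, rfl⟩ := hy
    exact ⟨a0 + b0, a1 + b1, a2 + b2, by push_cast; ring⟩
  | mul x y _ _ hx hy =>
    obtain ⟨a0, a1, a2, rfl⟩ := hx
    obtain ⟨b0, b1, b2, rfl⟩ := hy
    -- reduce the degree 3 and 4 terms with `α³ = 1 - α` and `α⁴ = α - α²`
    refine ⟨a0 * b0 + a1 * b2 + a2 * b1, a0 * b1 + a1 * b0 - a1 * b2 - a2 * b1 + a2 * b2,
      a0 * b2 + a1 * b1 + a2 * b0 - a2 * b2, ?_⟩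
    push_cast
    linear_combination (a1 * b2 + a2 * b1 + a2 * b2 * α : A) * hα

lemma eventually_eq_zero_of_tendsto_intCast {ι : Type*} {l : Filter ι} {n : ι → ℤ}
    (h : Tendsto (fun i => (n i : ℝ)) l (𝓝 0)) : ∀ᶠ i in l, n i = 0 := by
  filter_upwards [h.eventually (Metric.ball_mem_nhds 0 one_pos)] with i hi
  have hi' : |n i| < 1 := by exact_mod_cast (by simpa using hi : |(n i : ℝ)| < 1)
  exact Int.abs_lt_one_iff.mp hi'

lemma exists_round_add_three_of_tendsto {y : ℕ → ℝ} (hy : ∀ k, y (k + 3) = y (k + 2) + y k)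
    (h : Tendsto (fun k => y k - round (y k)) atTop (𝓝 0)) :
    ∃ K, ∀ k ≥ K, round (y (k + 3)) = round (y (k + 2)) + round (y k) := by
  have hdefect : Tendsto (fun k => ((round (y (k + 2)) + round (y k) - round (y (k + 3)) : ℤ) : ℝ))
      atTop (𝓝 0) := by
    have := ((h.comp (tendsto_add_atTop_nat 3)).sub (h.comp (tendsto_add_atTop_nat 2))).sub h
    rw [sub_zero, sub_zero] at this
    refine this.congr fun k => ?_
    simp only [Function.comp_apply, hy]
    push_cast
    ring
  obtain ⟨K, hK⟩ := eventually_atTop.mp (eventually_eq_zero_of_tendsto_intCast hdefect)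
  exact ⟨K, fun k hk => by linarith [hK k hk]⟩

lemma pos_and_lt_one_of_pow_three_add_self {α : ℝ} (hα : α ^ 3 + α = 1) : 0 < α ∧ α < 1 := by
  constructor <;> nlinarith [sq_nonneg α]

/-- The pairing of `(x k, x (k+1), x (k+2))` with the left eigenvector `(α, α², 1)` of the companion
matrix of `X³ - X² - 1` for its real root `1/α`; it isolates the dominant component of a solution
of the recurrence. -/
def dominantPart (α : ℝ) (x : ℕ → ℝ) (k : ℕ) : ℝ :=
  x (k + 2) + α ^ 2 * x (k + 1) + α * x k

section dominantPart

variable {α : ℝ} {x : ℕ → ℝ}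

lemma mul_dominantPart_succ (hα : α ^ 3 + α = 1) {k : ℕ} (hk : x (k + 3) = x (k + 2) + x k) :
    α * dominantPart α x (k + 1) = dominantPart α x k := by
  unfold dominantPart
  rw [hk]
  linear_combination x (k + 2) * hα

lemma dominantPart_eq_zero_of_tendsto_zero (hα : α ^ 3 + α = 1) {K : ℕ}
    (hrec : ∀ k ≥ K, x (k + 3) = x (k + 2) + x k) (hx : Tendsto x atTop (𝓝 0)) :
    dominantPart α x K = 0 := by
  have hpow : ∀ n, dominantPart α x K = α ^ n * dominantPart α x (n + K) := by
    intro n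
    induction n with
    | zero => simp
    | succ n ih =>
      rw [ih, ← mul_dominantPart_succ hα (hrec (n + K) (by omega)), Nat.add_right_comm]
      ring
  have hD : Tendsto (fun n => dominantPart α x (n + K)) atTop (𝓝 0) := by
    have hshift (j : ℕ) : Tendsto (fun n => x (n + K + j)) atTop (𝓝 0) :=
      hx.comp (tendsto_atTop_mono (fun n => show n ≤ n + K + j by omega) tendsto_id)
    simpa [dominantPart, add_assoc] using
      (hshift 2).add (((hshift 1).const_mul (α ^ 2)).add ((hshift 0).const_mul α))
  obtain ⟨hα0, hα1⟩ := pos_and_lt_one_of_pow_three_add_self hα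
  have hlim := (tendsto_pow_atTop_nhds_zero_of_lt_one hα0.le hα1).mul hD
  rw [zero_mul] at hlim
  exact tendsto_nhds_unique (tendsto_const_nhds.congr hpow) hlim

end dominantPart

lemma pow_mul_dominantPart_narayana {α : ℝ} (hα : α ^ 3 + α = 1) (k : ℕ) :
    α ^ (k + 3) * dominantPart α (fun n => (narayana n : ℝ)) k = 1 := by
  induction k with
  | zero =>
    simp only [dominantPart, narayana]
    linear_combination (α ^ 2 + α + 1) * hα
  | succ k ih =>
    rw [← ih, ← mul_dominantPart_succ hα (k := k) (by simp [narayana_add_three])]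
    ring

/-- Let `α` be the (unique) real root of `x³ + x = 1`.  If `β` is
a real number such that `‖β · h k‖ → 0` as `k → ∞`, then `β ∈ ℤ[α]`: there exist
integers `m₀, m₁, m₂` with `β = m₀ + m₁·α + m₂·α²`. -/
theorem mem_Zalpha_of_distToInt_narayana_tendsto_zero
    (α : ℝ) (hα : α ^ 3 + α = 1) (β : ℝ)
    (h : Filter.Tendsto (fun k : ℕ => distToInt (β * (narayana k : ℝ)))
      Filter.atTop (nhds 0)) :
    ∃ m0 m1 m2 : ℤ, β = (m0 : ℝ) + (m1 : ℝ) * α + (m2 : ℝ) * α ^ 2 := by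
  set E : ℕ → ℝ := fun k => β * narayana k - round (β * narayana k)
  have hE : Tendsto E atTop (𝓝 0) := (tendsto_zero_iff_abs_tendsto_zero E).mpr h
  obtain ⟨K, hK⟩ := exists_round_add_three_of_tendsto (y := fun k => β * narayana k)
    (fun k => by simp [narayana_add_three, mul_add]) hE
  have hD : dominantPart α E K = 0 := by
    refine dominantPart_eq_zero_of_tendsto_zero hα (fun k hk => ?_) hE
    simp only [E]
    rw [hK k hk, narayana_add_three]
    push_cast
    ring
  have hβ : β = α ^ (K + 3) * dominantPart α (fun k => (round (β * narayana k) : ℝ)) K := by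
    have hh := pow_mul_dominantPart_narayana hα K
    simp only [dominantPart, E] at hD hh ⊢
    linear_combination α ^ (K + 3) * hD - β * hh
  apply exists_eq_of_mem_adjoin_int hα
  have hα_mem : α ∈ Algebra.adjoin ℤ {α} := Algebra.self_mem_adjoin_singleton ℤ α
  rw [hβ, dominantPart]
  exact mul_mem (pow_mem hα_mem _) (add_mem (add_mem (intCast_mem _ _)
    (mul_mem (pow_mem hα_mem _) (intCast_mem _ _))) (mul_mem hα_mem (intCast_mem _ _)))
end

section
/- Let a be a sequence of mild signature, and for each natural number n let s(n) denote the sum of the digits of n when written greedily in base a, i.e., s(n) = ∑_i c_i where n = ∑_i c_i·a(i) is the greedy representation. If γ is an irrational real number, then the sequence γ·s(n) is equidistributed modulo 1: for every nonzero integer d, (1/N)·∑_{n=0}^{N−1} e(d·γ·s(n)) → 0 as N → ∞. -/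
open Filter

/-- `e x = exp (2 π i x)`. -/
noncomputable def expCirc (x : ℝ) : ℂ := Complex.exp (2 * Real.pi * Complex.I * x)

/-- Auxiliary fueled greedy algorithm: given the base sequence `a` and a remainder `r`,
repeatedly subtract the largest `a i` (with `i ≥ 1`) not exceeding the remainder,
recording the list of indices used (with multiplicity). -/
def greedyIdxAux (a : ℕ → ℕ) : ℕ → ℕ → List ℕ
  | 0, _ => []
  | fuel + 1, r =>
    if r = 0 then []
    else
      let i := Nat.findGreatest (fun j => 1 ≤ j ∧ a j ≤ r) r
      i :: greedyIdxAux a fuel (r - a i)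

/-- The list of indices (with multiplicity) appearing in the greedy representation
of `n` in base `a`: `n = ∑_{i ∈ greedyIdx a n} a i`, where at each step the largest
`a i` not exceeding the remainder is subtracted. -/
def greedyIdx (a : ℕ → ℕ) (n : ℕ) : List ℕ := greedyIdxAux a n n

/-- Auxiliary fueled greedy algorithm with the indices capped by `cap`. -/
def greedyIdxCapAux (a : ℕ → ℕ) (cap : ℕ) : ℕ → ℕ → List ℕ
  | 0, _ => []
  | fuel + 1, r =>
    if r = 0 then []
    else
      let i := Nat.findGreatest (fun j => 1 ≤ j ∧ j ≤ cap ∧ a j ≤ r) r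
      i :: greedyIdxCapAux a cap fuel (r - a i)

/-- The greedy representation of `n` in base `a` using only indices `≤ cap`. -/
def greedyIdxCap (a : ℕ → ℕ) (cap n : ℕ) : List ℕ := greedyIdxCapAux a cap n n

/-- A strictly increasing sequence `a` with `a 1 = 1` has *mild signature* if:
(i) there is a constant `L` such that for every `n ≥ 2` the greedy representation
of `a n` in base `a` using only earlier terms `a 1, …, a (n-1)` only uses the
terms `a (n-1), …, a (n-L)`; and (ii) there are reals `r, s > 1` with
`r · a n < a (n+1) < s · a n` for every `n ≥ 1`. -/
structure MildSignature (a : ℕ → ℕ) : Prop where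
  a_one : a 1 = 1
  mono : ∀ n, 1 ≤ n → a n < a (n + 1)
  signature : ∃ L : ℕ, ∀ n, 2 ≤ n → ∀ i ∈ greedyIdxCap a (n - 1) (a n), n ≤ i + L
  growth : ∃ r s : ℝ, 1 < r ∧ 1 < s ∧ ∀ n, 1 ≤ n →
    r * (a n : ℝ) < (a (n + 1) : ℝ) ∧ (a (n + 1) : ℝ) < s * (a n : ℝ)

/-- The replacement sequence of `a` by `b`: write `n` greedily in base `a` and
replace each occurrence of `a i` by `b i`. -/
def replSeq (a : ℕ → ℕ) (b : ℕ → ℤ) (n : ℕ) : ℤ := ((greedyIdx a n).map b).sum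

/-- The sum of the digits of `n` written greedily in base `a`. -/
def greedyDigitSum (a : ℕ → ℕ) (n : ℕ) : ℕ := (greedyIdx a n).length

/-!
Write `T N = ∑_{n < N} e(θ s(n))`. If `i` is the leading greedy index of `N`, every `n` in
`[a i, N)` has leading digit `a i`, so `T N = T (a i) + e(θ) T (N - a i)`; hence
`|T N| ≤ ε N + C` as soon as `|T (a k)| ≤ ε a k` for large `k`, and it suffices that
`v k = |T (a k)| / a k → 0`.

Suppose `c = limsup v > 0`, fix a small `ε`, and put `M = c + ε`, so that `|T (a k)| ≤ M a k`
eventually. The mild signature says that the digits of `a n - a (n - 1)` all lie in `[n - L, n)`,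
so `T (a n)` is a twisted sum of blocks `T (a i)` with total weight `a n`: its defect
`M a n - |T (a n)|` dominates the defect of every block, and a small defect forces near-equality
in the triangle inequality, i.e. every block points in the direction of `T (a n)`. Pick `j` with
`v j > c - ε`, whose defect is `O(ε a j)`. Following the top digits `j - 1, j - 2, …` shows that
the directions of `T (a i)`, `j - L ≤ i ≤ j`, are all close to that of `T (a j)`; but the second
digit `i` of `a j` enters `T (a j)` as `e(θ) T (a i)`, so `e(θ)` is close to `1`. This is
impossible for irrational `θ` once `ε` is small enough.
-/

open Topology

theorem sub_norm_le_sub_norm_of_norm_sub_le {G : Type*} [SeminormedAddGroup G] {x z : G}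
    {M A C : ℝ} (hzx : ‖z - x‖ ≤ M * (C - A)) : M * A - ‖x‖ ≤ M * C - ‖z‖ := by
  have := norm_le_insert' z x
  linarith

section Direction

variable {E : Type*} [NormedAddCommGroup E] [InnerProductSpace ℝ E]

theorem norm_inv_norm_smul_sub_sq_le {x z : E} (hx : x ≠ 0) :
    ‖‖x‖⁻¹ • x - ‖z‖⁻¹ • z‖ ^ 2 ≤ 2 * (‖x‖ + ‖z - x‖ - ‖z‖) / ‖x‖ := by
  have hx0 : 0 < ‖x‖ := norm_pos_iff.2 hx
  have hzx : ‖z‖ ≤ ‖x‖ + ‖z - x‖ := norm_le_insert' z x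
  have hunit : ∀ {w : E}, w ≠ 0 → ‖‖w‖⁻¹ • w‖ = 1 := fun hw => by
    rw [norm_smul, norm_inv, norm_norm, inv_mul_cancel₀ (norm_ne_zero_iff.2 hw)]
  rcases eq_or_ne z 0 with rfl | hz
  · rw [norm_zero, inv_zero, zero_smul, sub_zero, hunit hx, le_div_iff₀ hx0]
    simp only [zero_sub, norm_neg]
    linarith
  have hz0 : 0 < ‖z‖ := norm_pos_iff.2 hz
  -- `⟪x, z⟫ = ‖z‖² - ⟪z - x, z⟫ ≥ ‖z‖ (‖z‖ - ‖z - x‖)`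
  have hinner : ‖z‖ * (‖z‖ - ‖z - x‖) ≤ inner ℝ x z := by
    have h := real_inner_le_norm (z - x) z
    rw [inner_sub_left, real_inner_self_eq_norm_sq] at h
    nlinarith
  rw [norm_sub_sq_real, hunit hx, hunit hz, real_inner_smul_left,
    real_inner_smul_right, le_div_iff₀ hx0]
  have key : ‖x‖⁻¹ * (‖z‖⁻¹ * inner ℝ x z) * ‖x‖ = ‖z‖⁻¹ * inner ℝ x z := by
    field_simp
  have key2 : ‖z‖ - ‖z - x‖ ≤ ‖z‖⁻¹ * inner ℝ x z := by
    rw [le_inv_mul_iff₀ hz0]; exact hinner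
  nlinarith

theorem norm_inv_norm_smul_sub_le_sqrt {x z : E} {M A C ρ : ℝ} (hM : 0 < M) (hA : 0 < A)
    (hρ : 2 * ρ ≤ M) (hx : ‖x‖ ≤ M * A) (hzx : ‖z - x‖ ≤ M * (C - A))
    (hz : M * C - ‖z‖ ≤ ρ * A) :
    ‖‖x‖⁻¹ • x - ‖z‖⁻¹ • z‖ ≤ √(4 * ρ / M) := by
  have htri : ‖z‖ ≤ ‖x‖ + ‖z - x‖ := norm_le_insert' z x
  have hxlow : M / 2 * A ≤ ‖x‖ := by nlinarith
  have hx0 : 0 < ‖x‖ := lt_of_lt_of_le (by positivity) hxlow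
  refine Real.le_sqrt_of_sq_le ((norm_inv_norm_smul_sub_sq_le (norm_pos_iff.1 hx0)).trans ?_)
  rw [div_le_div_iff₀ hx0 hM]
  nlinarith

end Direction

theorem expCirc_add (x y : ℝ) : expCirc (x + y) = expCirc x * expCirc y := by
  rw [expCirc, expCirc, expCirc, ← Complex.exp_add]
  push_cast
  ring_nf

theorem norm_expCirc (x : ℝ) : ‖expCirc x‖ = 1 := by
  rw [expCirc, Complex.norm_exp]
  simp

theorem expCirc_ne_one {θ : ℝ} (hθ : Irrational θ) : expCirc θ ≠ 1 := by
  rw [expCirc, Ne, Complex.exp_eq_one_iff]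
  rintro ⟨n, hn⟩
  have h2πI : 2 * (Real.pi : ℂ) * Complex.I ≠ 0 := by simp [Real.pi_ne_zero]
  have : (θ : ℂ) = n := mul_left_cancel₀ h2πI (by rw [hn]; ring)
  exact hθ.ne_int n (by exact_mod_cast this)

namespace GreedyBase

def greedyTop (a : ℕ → ℕ) (N : ℕ) : ℕ := Nat.findGreatest (fun j => 1 ≤ j ∧ a j ≤ N) N

section Greedy

variable {a : ℕ → ℕ} (h1 : a 1 = 1) (hmono : ∀ n, 1 ≤ n → a n < a (n + 1))

include hmono in
theorem strictMonoOn_Ici_one : StrictMonoOn a (Set.Ici 1) :=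
  strictMonoOn_Ici_of_pred_lt fun m hm => by
    simpa [Nat.sub_add_cancel hm.le] using hmono (m - 1) (Nat.le_sub_one_of_lt hm)

include hmono in
theorem a_lt_a {i j : ℕ} (hi : 1 ≤ i) (hij : i < j) : a i < a j :=
  strictMonoOn_Ici_one hmono hi (Set.mem_Ici.2 (hi.trans hij.le)) hij

include h1 hmono in
theorem self_le_a {i : ℕ} (hi : 1 ≤ i) : i ≤ a i := by
  induction i, hi using Nat.le_induction with
  | base => exact h1.ge
  | succ i hi ih => exact (hmono i hi).trans_le' ih

include hmono in
theorem a_le_a {i j : ℕ} (hi : 1 ≤ i) (hij : i ≤ j) : a i ≤ a j :=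
  (strictMonoOn_Ici_one hmono).monotoneOn hi (Set.mem_Ici.2 (hi.trans hij)) hij

include hmono in
theorem lt_of_a_lt_a {i j : ℕ} (hj : 1 ≤ j) (h : a i < a j) : i < j := by
  by_contra! hji
  exact (a_le_a hmono hj hji).not_gt h

include h1 hmono in
theorem a_pos {i : ℕ} (hi : 1 ≤ i) : 0 < a i := hi.trans (self_le_a h1 hmono hi)

include h1 in
theorem greedyTop_spec {N : ℕ} (hN : 1 ≤ N) : 1 ≤ greedyTop a N ∧ a (greedyTop a N) ≤ N :=
  Nat.findGreatest_spec (P := fun j => 1 ≤ j ∧ a j ≤ N) hN ⟨le_rfl, by rw [h1]; exact hN⟩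

include h1 hmono in
theorem lt_a_greedyTop_succ (N : ℕ) : N < a (greedyTop a N + 1) := by
  by_contra! h
  have hle : greedyTop a N + 1 ≤ N := (self_le_a h1 hmono (Nat.le_add_left 1 _)).trans h
  exact Nat.findGreatest_is_greatest (Nat.lt_succ_self _) hle ⟨Nat.le_add_left 1 _, h⟩

include h1 hmono in
theorem greedyTop_eq {i N : ℕ} (hi : 1 ≤ i) (hiN : a i ≤ N) (hNi : N < a (i + 1)) :
    greedyTop a N = i := by
  have hN : 1 ≤ N := hi.trans ((self_le_a h1 hmono hi).trans hiN)
  obtain ⟨-, htopN⟩ := greedyTop_spec h1 hN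
  refine le_antisymm ?_ (Nat.le_findGreatest ((self_le_a h1 hmono hi).trans hiN) ⟨hi, hiN⟩)
  exact Nat.lt_succ_iff.1 (lt_of_a_lt_a hmono (by omega) (htopN.trans_lt hNi))

theorem greedyIdxAux_succ {fuel r : ℕ} (hr : r ≠ 0) :
    greedyIdxAux a (fuel + 1) r = greedyTop a r :: greedyIdxAux a fuel (r - a (greedyTop a r)) :=
  if_neg hr

theorem greedyIdxCapAux_succ {cap fuel r : ℕ} (hr : r ≠ 0) :
    greedyIdxCapAux a cap (fuel + 1) r =
      Nat.findGreatest (fun j => 1 ≤ j ∧ j ≤ cap ∧ a j ≤ r) r ::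
        greedyIdxCapAux a cap fuel
          (r - a (Nat.findGreatest (fun j => 1 ≤ j ∧ j ≤ cap ∧ a j ≤ r) r)) :=
  if_neg hr

include h1 hmono in
theorem greedyIdxAux_fuel {fuel fuel' r : ℕ} (hr : r ≤ fuel) (hr' : r ≤ fuel') :
    greedyIdxAux a fuel r = greedyIdxAux a fuel' r := by
  induction fuel generalizing fuel' r with
  | zero =>
    obtain rfl : r = 0 := by omega
    cases fuel' <;> rfl
  | succ fuel ih =>
    rcases Nat.eq_zero_or_pos r with rfl | hr0
    · cases fuel' <;> rfl
    obtain ⟨fuel', rfl⟩ : ∃ f, fuel' = f + 1 := ⟨fuel' - 1, by omega⟩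
    obtain ⟨htop, htopr⟩ := greedyTop_spec h1 hr0
    have ha := a_pos h1 hmono htop
    rw [greedyIdxAux_succ hr0.ne', greedyIdxAux_succ hr0.ne']
    exact congrArg _ (ih (by omega) (by omega))

include h1 hmono in
theorem greedyIdx_of_pos {N : ℕ} (hN : 1 ≤ N) :
    greedyIdx a N = greedyTop a N :: greedyIdx a (N - a (greedyTop a N)) := by
  obtain ⟨htop, -⟩ := greedyTop_spec h1 hN
  have ha := a_pos h1 hmono htop
  obtain ⟨m, hm⟩ : ∃ m, N = m + 1 := ⟨N - 1, by omega⟩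
  rw [greedyIdx, greedyIdx, hm, greedyIdxAux_succ (by omega : m + 1 ≠ 0), ← hm,
    greedyIdxAux_fuel h1 hmono (by omega) le_rfl]

include h1 hmono in
theorem greedyDigitSum_eq_succ {N i : ℕ} (hi : 1 ≤ i) (hiN : a i ≤ N) (hNi : N < a (i + 1)) :
    greedyDigitSum a N = greedyDigitSum a (N - a i) + 1 := by
  have hN : 1 ≤ N := hi.trans ((self_le_a h1 hmono hi).trans hiN)
  rw [greedyDigitSum, greedyIdx_of_pos h1 hmono hN, greedyTop_eq h1 hmono hi hiN hNi,
    List.length_cons, greedyDigitSum]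

include hmono in
theorem greedyIdxCapAux_eq_greedyIdxAux {cap fuel r : ℕ} (hr : r < a (cap + 1)) :
    greedyIdxCapAux a cap fuel r = greedyIdxAux a fuel r := by
  induction fuel generalizing r with
  | zero => rfl
  | succ fuel ih =>
    rcases Nat.eq_zero_or_pos r with rfl | hr0
    · rfl
    have hcap : ∀ j, a j ≤ r → j ≤ cap := fun j hj =>
      Nat.lt_succ_iff.1 (lt_of_a_lt_a hmono (by omega) (hj.trans_lt hr))
    have htop : Nat.findGreatest (fun j => 1 ≤ j ∧ j ≤ cap ∧ a j ≤ r) r = greedyTop a r := by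
      unfold greedyTop
      congr 1
      ext j
      exact ⟨fun h => ⟨h.1, h.2.2⟩, fun h => ⟨h.1, hcap j h.2, h.2⟩⟩
    rw [greedyIdxCapAux_succ hr0.ne', greedyIdxAux_succ hr0.ne', htop,
      ih ((Nat.sub_le _ _).trans_lt hr)]

include h1 hmono in
theorem greedyIdxCap_pred_a {n : ℕ} (hn : 2 ≤ n) :
    greedyIdxCap a (n - 1) (a n) = (n - 1) :: greedyIdx a (a n - a (n - 1)) := by
  have hlt : a (n - 1) < a n := a_lt_a hmono (by omega) (by omega)
  have hsucc : n - 1 + 1 = n := by omega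
  have hpos : 0 < a (n - 1) := a_pos h1 hmono (by omega)
  have htop : Nat.findGreatest (fun j => 1 ≤ j ∧ j ≤ n - 1 ∧ a j ≤ a n) (a n) = n - 1 := by
    refine Nat.findGreatest_eq_iff.2 ⟨(self_le_a h1 hmono (by omega)).trans hlt.le,
      fun _ => ⟨by omega, le_rfl, hlt.le⟩, fun k hk _ hP => by omega⟩
  obtain ⟨m, hm⟩ : ∃ m, a n = m + 1 := ⟨a n - 1, by omega⟩
  rw [greedyIdxCap, hm, greedyIdxCapAux_succ (by omega : m + 1 ≠ 0), ← hm, htop,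
    greedyIdxCapAux_eq_greedyIdxAux hmono (by rw [hsucc]; omega), greedyIdx,
    greedyIdxAux_fuel h1 hmono (by omega) le_rfl]

end Greedy

noncomputable def expSum (a : ℕ → ℕ) (θ : ℝ) (N : ℕ) : ℂ :=
  ∑ n ∈ Finset.range N, expCirc (θ * greedyDigitSum a n)

theorem norm_expSum_le (a : ℕ → ℕ) (θ : ℝ) (N : ℕ) : ‖expSum a θ N‖ ≤ N :=
  (norm_sum_le _ _).trans (by simp [norm_expCirc])

section ExpSum

variable {a : ℕ → ℕ} (h1 : a 1 = 1) (hmono : ∀ n, 1 ≤ n → a n < a (n + 1)) (θ : ℝ)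
include h1 hmono

theorem expSum_eq_add {i N : ℕ} (hi : 1 ≤ i) (hiN : a i ≤ N) (hNi : N ≤ a (i + 1)) :
    expSum a θ N = expSum a θ (a i) + expCirc θ * expSum a θ (N - a i) := by
  obtain ⟨k, rfl⟩ := Nat.exists_eq_add_of_le hiN
  rw [expSum, Finset.sum_range_add, Nat.add_sub_cancel_left, expSum, expSum, Finset.mul_sum]
  congr 1
  refine Finset.sum_congr rfl fun n hn => ?_
  rw [greedyDigitSum_eq_succ h1 hmono hi (Nat.le_add_right _ _)
    (by have := Finset.mem_range.1 hn; omega), Nat.add_sub_cancel_left, ← expCirc_add]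
  push_cast
  ring_nf

theorem expSum_eq_add_greedyTop {N : ℕ} (hN : 1 ≤ N) :
    expSum a θ N = expSum a θ (a (greedyTop a N)) +
      expCirc θ * expSum a θ (N - a (greedyTop a N)) :=
  expSum_eq_add h1 hmono θ (greedyTop_spec h1 hN).1 (greedyTop_spec h1 hN).2
    (lt_a_greedyTop_succ h1 hmono N).le

theorem norm_expSum_le_add_greedyTop {N : ℕ} (hN : 1 ≤ N) :
    ‖expSum a θ N‖ ≤ ‖expSum a θ (a (greedyTop a N))‖ + ‖expSum a θ (N - a (greedyTop a N))‖ := by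
  rw [expSum_eq_add_greedyTop h1 hmono θ hN, ← one_mul ‖expSum a θ (N - _)‖, ← norm_expCirc θ,
    ← norm_mul]
  exact norm_add_le _ _

theorem norm_expSum_le_of_forall_mem_greedyIdx {M : ℝ} {N : ℕ}
    (hM : ∀ i ∈ greedyIdx a N, ‖expSum a θ (a i)‖ ≤ M * a i) : ‖expSum a θ N‖ ≤ M * N := by
  induction N using Nat.strong_induction_on with
  | _ N ih =>
    rcases Nat.eq_zero_or_pos N with rfl | hN
    · simp [expSum]
    rw [greedyIdx_of_pos h1 hmono hN] at hM
    obtain ⟨htop, htopN⟩ := greedyTop_spec h1 hN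
    have hpos := a_pos h1 hmono htop
    calc ‖expSum a θ N‖
        ≤ ‖expSum a θ (a (greedyTop a N))‖ + ‖expSum a θ (N - a (greedyTop a N))‖ :=
          norm_expSum_le_add_greedyTop h1 hmono θ hN
      _ ≤ M * a (greedyTop a N) + M * ↑(N - a (greedyTop a N)) :=
          add_le_add (hM _ List.mem_cons_self)
            (ih _ (by omega) fun i hi => hM i (List.mem_cons_of_mem _ hi))
      _ = M * N := by rw [Nat.cast_sub htopN]; ring

theorem norm_expSum_le_add {ε : ℝ} {K : ℕ} (hε : 0 ≤ ε) (hK : 1 ≤ K)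
    (hsmall : ∀ i, K ≤ i → ‖expSum a θ (a i)‖ ≤ ε * a i) (N : ℕ) :
    ‖expSum a θ N‖ ≤ ε * N + a K := by
  induction N using Nat.strong_induction_on with
  | _ N ih =>
    rcases Nat.lt_or_ge N (a K) with hNK | hNK
    · calc ‖expSum a θ N‖ ≤ N := norm_expSum_le a θ N
        _ ≤ a K := by exact_mod_cast hNK.le
        _ ≤ ε * N + a K := le_add_of_nonneg_left (by positivity)
    have hN : 1 ≤ N := (a_pos h1 hmono hK).trans_le hNK
    obtain ⟨htop, htopN⟩ := greedyTop_spec h1 hN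
    have hpos := a_pos h1 hmono htop
    have hKtop : K ≤ greedyTop a N := Nat.lt_succ_iff.1
      (lt_of_a_lt_a hmono (by omega) (hNK.trans_lt (lt_a_greedyTop_succ h1 hmono N)))
    calc ‖expSum a θ N‖
        ≤ ‖expSum a θ (a (greedyTop a N))‖ + ‖expSum a θ (N - a (greedyTop a N))‖ :=
          norm_expSum_le_add_greedyTop h1 hmono θ hN
      _ ≤ ε * a (greedyTop a N) + (ε * ↑(N - a (greedyTop a N)) + a K) :=
          add_le_add (hsmall _ hKtop) (ih _ (by omega))
      _ = ε * N + a K := by rw [Nat.cast_sub htopN]; ring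

end ExpSum

section Rigidity

variable {a : ℕ → ℕ} (h1 : a 1 = 1) (hmono : ∀ n, 1 ≤ n → a n < a (n + 1)) {L : ℕ}
  (hsig : ∀ n, 2 ≤ n → ∀ i ∈ greedyIdx a (a n - a (n - 1)), n ≤ i + L)
  (θ : ℝ) {M : ℝ} {K : ℕ} (hM : ∀ i, K ≤ i → ‖expSum a θ (a i)‖ ≤ M * a i)
include h1 hmono hsig hM

theorem norm_expSum_a_sub_pred_le {n : ℕ} (hn2 : 2 ≤ n) (hn : K + L ≤ n) :
    ‖expSum a θ (a n) - expSum a θ (a (n - 1))‖ ≤ M * (a n - a (n - 1)) := by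
  have hlt : a (n - 1) < a n := a_lt_a hmono (by omega) (by omega)
  rw [expSum_eq_add h1 hmono θ (i := n - 1) (by omega) hlt.le
      (by rw [Nat.sub_add_cancel (by omega)]), add_sub_cancel_left, norm_mul, norm_expCirc,
    one_mul, ← Nat.cast_sub hlt.le]
  exact norm_expSum_le_of_forall_mem_greedyIdx h1 hmono θ fun i hi =>
    hM i (by have := hsig n hn2 i hi; omega)

theorem exists_norm_expSum_a_sub_le {n : ℕ} (hn2 : 2 ≤ n) (hn : K + L ≤ n) :
    ∃ i, n ≤ i + L ∧ i < n ∧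
      ‖expSum a θ (a n) - expCirc θ * expSum a θ (a i)‖ ≤ M * (a n - a i) := by
  have hlt : a (n - 1) < a n := a_lt_a hmono (by omega) (by omega)
  set r := a n - a (n - 1) with hr_def
  have hr : 1 ≤ r := by omega
  have hdigits := greedyIdx_of_pos h1 hmono hr
  set i := greedyTop a r
  obtain ⟨hi1, hir⟩ := greedyTop_spec h1 hr
  have hiL := hsig n hn2 i (hdigits ▸ List.mem_cons_self)
  have hin : i < n := lt_of_a_lt_a hmono (by omega)
    (hir.trans_lt (Nat.sub_lt (by omega) (a_pos h1 hmono (by omega))))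
  refine ⟨i, hiL, hin, ?_⟩
  have hsplit : expSum a θ (a n) - expCirc θ * expSum a θ (a i) =
      expSum a θ (a (n - 1)) + expCirc θ * expCirc θ * expSum a θ (r - a i) := by
    rw [expSum_eq_add h1 hmono θ (i := n - 1) (by omega) hlt.le
      (by rw [Nat.sub_add_cancel (by omega)]), ← hr_def, expSum_eq_add_greedyTop h1 hmono θ hr]
    ring
  have htail : ‖expSum a θ (r - a i)‖ ≤ M * ↑(r - a i) :=
    norm_expSum_le_of_forall_mem_greedyIdx h1 hmono θ fun k hk =>
      hM k (by have := hsig n hn2 k (hdigits ▸ List.mem_cons_of_mem _ hk); omega)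
  rw [hsplit]
  calc _ ≤ ‖expSum a θ (a (n - 1))‖ + ‖expSum a θ (r - a i)‖ := by
        refine (norm_add_le _ _).trans_eq ?_
        rw [norm_mul, norm_mul, norm_expCirc, one_mul, one_mul]
    _ ≤ M * a (n - 1) + M * ↑(r - a i) := add_le_add (hM _ (by omega)) htail
    _ = M * (a n - a i) := by
        rw [Nat.cast_sub hir, hr_def, Nat.cast_sub hlt.le]; ring

theorem norm_inv_norm_smul_expSum_a_sub_le {ρ : ℝ} {j : ℕ} (hM0 : 0 < M) (hρ : 2 * ρ ≤ M)
    (hK : 1 ≤ K) (hj : K + 2 * L < j)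
    (hdef : ∀ m, j ≤ m + L → m ≤ j → M * a j - ‖expSum a θ (a j)‖ ≤ ρ * a m)
    {p : ℕ} (hp : p ≤ L) :
    M * a (j - p) - ‖expSum a θ (a (j - p))‖ ≤ M * a j - ‖expSum a θ (a j)‖ ∧
      ‖‖expSum a θ (a (j - p))‖⁻¹ • expSum a θ (a (j - p)) -
        ‖expSum a θ (a j)‖⁻¹ • expSum a θ (a j)‖ ≤ p * √(4 * ρ / M) := by
  induction p with
  | zero => simp
  | succ p ih =>
    obtain ⟨ihdef, ihdir⟩ := ih (by omega)
    have hpos : (0 : ℝ) < a (j - (p + 1)) := Nat.cast_pos.2 (a_pos h1 hmono (by omega))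
    have hpred : j - p - 1 = j - (p + 1) := by omega
    have hstep := norm_expSum_a_sub_pred_le h1 hmono hsig θ hM (n := j - p) (by omega) (by omega)
    rw [hpred] at hstep
    have hdir' := norm_inv_norm_smul_sub_le_sqrt hM0 hpos hρ (hM _ (by omega)) hstep
      (ihdef.trans (hdef _ (by omega) (by omega)))
    refine ⟨(sub_norm_le_sub_norm_of_norm_sub_le hstep).trans ihdef,
      (norm_sub_le_norm_sub_add_norm_sub _
        (‖expSum a θ (a (j - p))‖⁻¹ • expSum a θ (a (j - p))) _).trans ?_⟩
    push_cast
    linarith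

theorem norm_expCirc_sub_one_le {ρ : ℝ} {j : ℕ} (hM0 : 0 < M) (hρ : 2 * ρ ≤ M) (hK : 1 ≤ K)
    (hj : K + 2 * L < j)
    (hdef : ∀ m, j ≤ m + L → m ≤ j → M * a j - ‖expSum a θ (a j)‖ ≤ ρ * a m) :
    ‖expCirc θ - 1‖ ≤ (L + 1) * √(4 * ρ / M) := by
  obtain ⟨i, hiL, hij, hsplit⟩ := exists_norm_expSum_a_sub_le h1 hmono hsig θ hM (n := j)
    (by omega) (by omega)
  have hpos : (0 : ℝ) < a i := Nat.cast_pos.2 (a_pos h1 hmono (by omega))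
  have hnorm : ‖expCirc θ * expSum a θ (a i)‖ = ‖expSum a θ (a i)‖ := by
    rw [norm_mul, norm_expCirc, one_mul]
  have hdir := norm_inv_norm_smul_sub_le_sqrt hM0 hpos hρ (hnorm.trans_le (hM i (by omega)))
    hsplit (hdef i hiL hij.le)
  have hchain := (norm_inv_norm_smul_expSum_a_sub_le h1 hmono hsig θ hM hM0 hρ hK hj hdef
    (p := j - i) (by omega)).2
  rw [Nat.sub_sub_self hij.le] at hchain
  set u := ‖expSum a θ (a i)‖⁻¹ • expSum a θ (a i)
  set w := ‖expSum a θ (a j)‖⁻¹ • expSum a θ (a j)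
  have hu : ‖u‖ = 1 := by
    have : expSum a θ (a i) ≠ 0 := by
      intro h0
      have hdef' := sub_norm_le_sub_norm_of_norm_sub_le hsplit
      rw [hnorm, h0, norm_zero] at hdef'
      nlinarith [hdef i hiL hij.le]
    rw [norm_smul, norm_inv, norm_norm, inv_mul_cancel₀ (norm_ne_zero_iff.2 this)]
  rw [hnorm, ← mul_smul_comm] at hdir
  calc ‖expCirc θ - 1‖ = ‖(expCirc θ * u - w) + (w - u)‖ := by
        rw [← mul_one ‖expCirc θ - 1‖, ← hu, ← norm_mul]; congr 1; ring
    _ ≤ √(4 * ρ / M) + (j - i : ℕ) * √(4 * ρ / M) := by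
        refine (norm_add_le _ _).trans (add_le_add hdir ?_)
        rw [norm_sub_rev]; exact hchain
    _ ≤ (L + 1) * √(4 * ρ / M) := by
        have : ((j - i : ℕ) : ℝ) ≤ L := by exact_mod_cast (by omega : j - i ≤ L)
        nlinarith [Real.sqrt_nonneg (4 * ρ / M)]

end Rigidity

theorem a_le_pow_mul_a {a : ℕ → ℕ} {s : ℝ} (hs : 0 ≤ s)
    (hgrowth : ∀ n, 1 ≤ n → (a (n + 1) : ℝ) < s * a n) {m : ℕ} (hm : 1 ≤ m) (p : ℕ) :
    (a (m + p) : ℝ) ≤ s ^ p * a m := by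
  induction p with
  | zero => simp
  | succ p ih =>
    calc (a (m + p + 1) : ℝ) ≤ s * a (m + p) := (hgrowth _ (by omega)).le
      _ ≤ s * (s ^ p * a m) := by gcongr
      _ = s ^ (p + 1) * a m := by ring

theorem tendsto_norm_expSum_a_div {a : ℕ → ℕ} (h1 : a 1 = 1)
    (hmono : ∀ n, 1 ≤ n → a n < a (n + 1)) {L : ℕ}
    (hsig : ∀ n, 2 ≤ n → ∀ i ∈ greedyIdx a (a n - a (n - 1)), n ≤ i + L) {s : ℝ} (hs : 1 < s)
    (hgrowth : ∀ n, 1 ≤ n → (a (n + 1) : ℝ) < s * a n) {θ : ℝ} (hθ : expCirc θ ≠ 1) :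
    Tendsto (fun k => ‖expSum a θ (a k)‖ / a k) atTop (𝓝 0) := by
  set v := fun k => ‖expSum a θ (a k)‖ / a k
  have hv0 : ∀ k, 0 ≤ v k := fun k => by positivity
  have hv1 : ∀ k, v k ≤ 1 := fun k => div_le_one_of_le₀ (norm_expSum_le a θ _) (Nat.cast_nonneg _)
  set c := limsup v atTop
  suffices hc : c ≤ 0 from tendsto_order.2
    ⟨fun b hb => Eventually.of_forall fun k => hb.trans_le (hv0 k),
      fun b hb => eventually_lt_of_limsup_lt (hc.trans_lt hb) (isBoundedUnder_of ⟨1, hv1⟩)⟩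
  by_contra! hc
  set S := s ^ L
  have hS : 1 ≤ S := one_le_pow₀ hs.le
  have hδ : 0 < ‖expCirc θ - 1‖ := norm_pos_iff.2 (sub_ne_zero.2 hθ)
  -- the admissible `ε` form a neighbourhood of `0`, since both constraints hold at `ε = 0`
  have hsmall : ∀ᶠ ε in 𝓝 (0 : ℝ), 4 * (ε * S) < c ∧
      (L + 1) * √(4 * (2 * ε * S) / (c + ε)) < ‖expCirc θ - 1‖ := by
    refine (ContinuousAt.eventually_lt (by fun_prop) continuousAt_const (by simpa using hc)).and
      (ContinuousAt.eventually_lt ?_ continuousAt_const (by simpa using hδ))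
    exact continuousAt_const.mul ((continuousAt_const.mul (continuousAt_const.mul
      continuousAt_id |>.mul continuousAt_const)).div (continuousAt_const.add continuousAt_id)
      (by simpa using hc.ne')).sqrt
  obtain ⟨ε, ⟨hεc, hεδ⟩, hε⟩ := ((hsmall.filter_mono nhdsWithin_le_nhds).and
    self_mem_nhdsWithin).exists (f := 𝓝[>] (0 : ℝ))
  obtain ⟨K₀, hK₀⟩ := eventually_atTop.1 (eventually_lt_of_limsup_lt (lt_add_of_pos_right c hε)
    (isBoundedUnder_of ⟨1, hv1⟩))
  set K := max K₀ 1
  obtain ⟨j, hj, hvj⟩ := frequently_atTop.1 (frequently_lt_of_lt_limsup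
    (isCoboundedUnder_le_of_le atTop hv0) (sub_lt_self c hε)) (K + 2 * L + 1)
  have hapos : ∀ k, 1 ≤ k → (0 : ℝ) < a k := fun k hk => Nat.cast_pos.2 (a_pos h1 hmono hk)
  have hM : ∀ i, K ≤ i → ‖expSum a θ (a i)‖ ≤ (c + ε) * a i := fun i hi =>
    ((div_lt_iff₀ (hapos i (le_of_max_le_right hi))).1 (hK₀ i (le_of_max_le_left hi))).le
  have hdef : ∀ m, j ≤ m + L → m ≤ j →
      (c + ε) * a j - ‖expSum a θ (a j)‖ ≤ 2 * ε * S * a m := by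
    intro m hjm hmj
    have hm : 1 ≤ m := by omega
    have hgrow : (a j : ℝ) ≤ S * a m := by
      have := a_le_pow_mul_a (by linarith) hgrowth hm (j - m)
      rw [Nat.add_sub_cancel' hmj] at this
      exact this.trans (by gcongr; exact pow_le_pow_right₀ hs.le (by omega))
    have := (lt_div_iff₀ (hapos j (by omega))).1 hvj
    nlinarith
  refine absurd (norm_expCirc_sub_one_le h1 hmono hsig θ hM (by positivity) (by linarith)
    (le_max_right K₀ 1) (by omega) hdef) (not_le.2 hεδ)

theorem isLittleO_expSum {a : ℕ → ℕ} (h1 : a 1 = 1) (hmono : ∀ n, 1 ≤ n → a n < a (n + 1))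
    {θ : ℝ} (hv : Tendsto (fun k => ‖expSum a θ (a k)‖ / a k) atTop (𝓝 0)) :
    expSum a θ =o[atTop] (fun N : ℕ => (N : ℂ)) := by
  refine Asymptotics.isLittleO_iff.2 fun ε hε => ?_
  obtain ⟨K₀, hK₀⟩ := eventually_atTop.1 ((tendsto_order.1 hv).2 (ε / 2) (by positivity))
  set K := max K₀ 1
  have hsmall : ∀ i, K ≤ i → ‖expSum a θ (a i)‖ ≤ ε / 2 * a i := fun i hi => by
    have hpos : (0 : ℝ) < a i := Nat.cast_pos.2 (a_pos h1 hmono (le_of_max_le_right hi))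
    exact ((div_lt_iff₀ hpos).1 (hK₀ i (le_of_max_le_left hi))).le
  filter_upwards [eventually_ge_atTop ⌈2 * a K / ε⌉₊] with N hN
  have hbound := norm_expSum_le_add h1 hmono θ (by positivity) (le_max_right K₀ 1) hsmall N
  have : 2 * a K / ε ≤ N := (Nat.ceil_le.1 hN)
  rw [div_le_iff₀ hε] at this
  rw [Complex.norm_natCast]
  linarith

end GreedyBase

/-- Let `a` be a sequence of mild signature and `s n` the sum of
the digits of `n` written greedily in base `a`.  If `γ` is irrational, then
`γ · s n` is equidistributed modulo 1: for every nonzero integer `d`,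
`(1/N) ∑_{n=0}^{N-1} e (d γ s n) → 0`. -/
theorem greedy_digit_sum_equidistributed
    (a : ℕ → ℕ) (ha : MildSignature a) (γ : ℝ) (hγ : Irrational γ) :
    ∀ d : ℤ, d ≠ 0 →
      Tendsto
        (fun N : ℕ => (N : ℂ)⁻¹ * ∑ n ∈ Finset.range N,
          expCirc ((d : ℝ) * γ * (greedyDigitSum a n : ℝ)))
        atTop (nhds 0) := by
  intro d hd
  obtain ⟨L, hL⟩ := ha.signature
  obtain ⟨_, s, -, hs, hgrowth⟩ := ha.growth
  have hsig : ∀ n, 2 ≤ n → ∀ i ∈ greedyIdx a (a n - a (n - 1)), n ≤ i + L := fun n hn i hi =>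
    hL n hn i (by
      rw [GreedyBase.greedyIdxCap_pred_a ha.a_one ha.mono hn]; exact List.mem_cons_of_mem _ hi)
  have hv := GreedyBase.tendsto_norm_expSum_a_div ha.a_one ha.mono hsig hs
    (fun n hn => (hgrowth n hn).2) (expCirc_ne_one (hγ.intCast_mul hd))
  simpa only [div_eq_inv_mul, GreedyBase.expSum] using
    (GreedyBase.isLittleO_expSum ha.a_one ha.mono hv).tendsto_div_nhds_zero
end
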